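/- arXiv:1901.00663 — 8 statements merged into one kernel-verified Lean document; each statement's English description precedes it below -/
import Mathlib

section
/- If either π^m(a;x) = π(a;x) almost everywhere or Q^m(x,a) = Q(x,a) almost everywhere, then the population augmented inverse-probability-weighted value V^{AIPWE,m}(d) = E[ Y·1{A=d(X)}/π^m(A;X) − (1{A=d(X)} − π^m(d(X);X))/π^m(d(X);X) · Q^m(X, d(X)) ] equals the true value V(d) = E[Q(X, d(X))]. -/
open MeasureTheory

/-!
The AIPW integrand splits as `Y·I·(1/e)(X) − I·(m/e)(X) + m(X)` with `I = 1{A = d(X)}`,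
`e = π^m(d(·);·)` and `m = Q^m(·, d(·))`. Conditioning on `X` replaces `I` by `p = π(d(·);·)`
and `Y·I` by `p·q` with `q = Q(·, d(·))`, so the value becomes
`E[q(X) + (p − e)(q − m)/e (X)]`: the bias is a product of the two working-model errors,
and it vanishes as soon as either of them does.
-/

section

variable {α : Type*} [MeasurableSpace α] {μ : Measure α}

theorem integrable_of_abs_le [IsFiniteMeasure μ] {f : α → ℝ} (hf : Measurable f) {B : ℝ}
    (hB : ∀ x, |f x| ≤ B) : Integrable f μ :=
  .of_bound hf.aestronglyMeasurable B (.of_forall hB)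

theorem apply_eq_ite_mul_add_ite_mul {s : ℝ} (hs : s = 1 ∨ s = -1) (f : ℝ → ℝ) :
    f s = f 1 * (if s = 1 then 1 else 0) + f (-1) * (if s = -1 then 1 else 0) := by
  rcases hs with rfl | rfl <;> norm_num

theorem measurable_indicator_eq {s : α → ℝ} (hs : Measurable s) (a : ℝ) :
    Measurable fun x => if s x = a then (1 : ℝ) else 0 :=
  Measurable.ite (hs (measurableSet_singleton a)) measurable_const measurable_const

theorem abs_indicator_eq_le {s a : ℝ} : |(if s = a then (1 : ℝ) else 0)| ≤ 1 := by
  split_ifs <;> norm_num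

theorem measurable_apply_sign {f : ℝ → α → ℝ}
    (hf : ∀ a, (a = 1 ∨ a = -1) → Measurable (f a)) {s : α → ℝ} (hs : Measurable s)
    (hs1 : ∀ x, s x = 1 ∨ s x = -1) : Measurable fun x => f (s x) x := by
  simp only [fun x => apply_eq_ite_mul_add_ite_mul (hs1 x) (f · x)]
  exact ((hf 1 (.inl rfl)).mul (measurable_indicator_eq hs 1)).add
    ((hf (-1) (.inr rfl)).mul (measurable_indicator_eq hs (-1)))

theorem integrable_apply_sign {f : ℝ → α → ℝ}
    (hf : ∀ a, (a = 1 ∨ a = -1) → Integrable (f a) μ) {s : α → ℝ} (hs : Measurable s)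
    (hs1 : ∀ x, s x = 1 ∨ s x = -1) : Integrable (fun x => f (s x) x) μ := by
  simp only [fun x => apply_eq_ite_mul_add_ite_mul (hs1 x) (f · x)]
  exact ((hf 1 (.inl rfl)).mul_bdd (measurable_indicator_eq hs 1).aestronglyMeasurable
      (.of_forall fun _ => abs_indicator_eq_le)).add
    ((hf (-1) (.inr rfl)).mul_bdd (measurable_indicator_eq hs (-1)).aestronglyMeasurable
      (.of_forall fun _ => abs_indicator_eq_le))

end

section CondExpEq

variable {Ω β : Type*} [MeasurableSpace Ω] [MeasurableSpace β] {μ : Measure Ω} {X : Ω → β}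

theorem MeasureTheory.Integrable.mul_comp_of_abs_le {E : Ω → ℝ} (hE : Integrable E μ)
    (hX : Measurable X) {g : β → ℝ} (hg : Measurable g) {B : ℝ} (hB : ∀ x, |g x| ≤ B) :
    Integrable (fun ω => E ω * g (X ω)) μ :=
  hE.mul_bdd (hg.comp hX).aestronglyMeasurable (.of_forall fun ω => hB (X ω))

/-- `E[E | X] = E[F | X]`, phrased through test functions: `E` and `F` integrate to the same
value against every measurable function of `X` bounded by `1`. -/
def CondExpEq (μ : Measure Ω) (X : Ω → β) (E F : Ω → ℝ) : Prop :=
  ∀ h : β → ℝ, Measurable h → (∀ x, |h x| ≤ 1) →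
    ∫ ω, E ω * h (X ω) ∂μ = ∫ ω, F ω * h (X ω) ∂μ

namespace CondExpEq

variable {E F : Ω → ℝ}

theorem integral_mul_eq (h : CondExpEq μ X E F) {g : β → ℝ} (hg : Measurable g) {B : ℝ}
    (hB : ∀ x, |g x| ≤ B) : ∫ ω, E ω * g (X ω) ∂μ = ∫ ω, F ω * g (X ω) ∂μ := by
  set c := max B 1
  have hc : 0 < c := lt_of_lt_of_le one_pos (le_max_right B 1)
  have hscaled := h (fun x => c⁻¹ * g x) (measurable_const.mul hg) fun x => by
    rw [abs_mul, abs_of_pos (inv_pos.mpr hc), inv_mul_le_one₀ hc]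
    exact (hB x).trans (le_max_left B 1)
  simp only [mul_left_comm _ c⁻¹, integral_const_mul] at hscaled
  exact mul_left_cancel₀ (inv_ne_zero hc.ne') hscaled

theorem mul_comp (h : CondExpEq μ X E F) {g : β → ℝ} (hg : Measurable g)
    (hg1 : ∀ x, |g x| ≤ 1) :
    CondExpEq μ X (fun ω => E ω * g (X ω)) (fun ω => F ω * g (X ω)) := by
  intro k hk hk1
  have hgk := h (fun x => g x * k x) (hg.mul hk) fun x => by
    rw [abs_mul]; exact mul_le_one₀ (hg1 x) (abs_nonneg _) (hk1 x)
  simpa only [mul_assoc] using hgk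

theorem add {E' F' : Ω → ℝ} (h : CondExpEq μ X E F) (h' : CondExpEq μ X E' F')
    (hX : Measurable X) (hE : Integrable E μ) (hF : Integrable F μ) (hE' : Integrable E' μ)
    (hF' : Integrable F' μ) :
    CondExpEq μ X (fun ω => E ω + E' ω) (fun ω => F ω + F' ω) := by
  intro k hk hk1
  simp only [add_mul]
  rw [integral_add (hE.mul_comp_of_abs_le hX hk hk1) (hE'.mul_comp_of_abs_le hX hk hk1),
    integral_add (hF.mul_comp_of_abs_le hX hk hk1) (hF'.mul_comp_of_abs_le hX hk hk1),
    h k hk hk1, h' k hk hk1]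

end CondExpEq

theorem condExpEq_apply_sign {E F : ℝ → Ω → ℝ}
    (h : ∀ a, (a = 1 ∨ a = -1) → CondExpEq μ X (E a) (F a))
    (hE : ∀ a, (a = 1 ∨ a = -1) → Integrable (E a) μ)
    (hF : ∀ a, (a = 1 ∨ a = -1) → Integrable (F a) μ) (hX : Measurable X)
    {d : β → ℝ} (hd : Measurable d) (hd1 : ∀ x, d x = 1 ∨ d x = -1) :
    CondExpEq μ X (fun ω => E (d (X ω)) ω) (fun ω => F (d (X ω)) ω) := by
  have hmul {G : Ω → ℝ} (hG : Integrable G μ) (a : ℝ) :=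
    hG.mul_comp_of_abs_le hX (measurable_indicator_eq hd a) fun _ => abs_indicator_eq_le
  have hmix := ((h 1 (.inl rfl)).mul_comp (measurable_indicator_eq hd 1)
    fun _ => abs_indicator_eq_le).add
    ((h (-1) (.inr rfl)).mul_comp (measurable_indicator_eq hd (-1)) fun _ => abs_indicator_eq_le)
    hX (hmul (hE 1 (.inl rfl)) 1) (hmul (hF 1 (.inl rfl)) 1) (hmul (hE (-1) (.inr rfl)) (-1))
    (hmul (hF (-1) (.inr rfl)) (-1))
  convert hmix using 1
  · exact funext fun ω => apply_eq_ite_mul_add_ite_mul (hd1 (X ω)) (E · ω)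
  · exact funext fun ω => apply_eq_ite_mul_add_ite_mul (hd1 (X ω)) (F · ω)

theorem integral_aipw_eq [IsFiniteMeasure μ] {I Y : Ω → ℝ} {p q e m : β → ℝ} {τ C : ℝ}
    (hX : Measurable X)
    (hI : CondExpEq μ X I (fun ω => p (X ω)))
    (hYI : CondExpEq μ X (fun ω => Y ω * I ω) (fun ω => p (X ω) * q (X ω)))
    (hIi : Integrable I μ) (hYIi : Integrable (fun ω => Y ω * I ω) μ)
    (hpi : Integrable (fun ω => p (X ω)) μ) (hpqi : Integrable (fun ω => p (X ω) * q (X ω)) μ)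
    (he : Measurable e) (hm : Measurable m) (hτ : 0 < τ) (heτ : ∀ x, τ ≤ e x)
    (hmC : ∀ x, |m x| ≤ C)
    (hcase : (∀ᵐ ω ∂μ, e (X ω) = p (X ω)) ∨ (∀ᵐ ω ∂μ, m (X ω) = q (X ω))) :
    ∫ ω, (Y ω * I ω / e (X ω) - (I ω - e (X ω)) / e (X ω) * m (X ω)) ∂μ
      = ∫ ω, q (X ω) ∂μ := by
  have he0 (x : β) : e x ≠ 0 := (hτ.trans_le (heτ x)).ne'
  have hinv (x : β) : |(e x)⁻¹| ≤ τ⁻¹ := by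
    rw [abs_inv, abs_of_pos (hτ.trans_le (heτ x))]
    exact inv_anti₀ hτ (heτ x)
  have hmdiv (x : β) : |m x * (e x)⁻¹| ≤ C * τ⁻¹ := by
    rw [abs_mul]
    exact mul_le_mul (hmC x) (hinv x) (abs_nonneg _) ((abs_nonneg _).trans (hmC x))
  have hmi : Integrable (fun ω => m (X ω)) μ :=
    integrable_of_abs_le (hm.comp hX) fun ω => hmC (X ω)
  calc ∫ ω, (Y ω * I ω / e (X ω) - (I ω - e (X ω)) / e (X ω) * m (X ω)) ∂μ
      = ∫ ω, (Y ω * I ω * (e (X ω))⁻¹ - I ω * (m (X ω) * (e (X ω))⁻¹) + m (X ω)) ∂μ :=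
        integral_congr_ae <| .of_forall fun ω => by field_simp [he0 (X ω)]; ring
    _ = ∫ ω, Y ω * I ω * (e (X ω))⁻¹ ∂μ - ∫ ω, I ω * (m (X ω) * (e (X ω))⁻¹) ∂μ
          + ∫ ω, m (X ω) ∂μ := by
        rw [integral_add _ hmi, integral_sub]
        · exact hYIi.mul_comp_of_abs_le hX he.inv hinv
        · exact hIi.mul_comp_of_abs_le hX (hm.mul he.inv) hmdiv
        · exact (hYIi.mul_comp_of_abs_le hX he.inv hinv).sub
            (hIi.mul_comp_of_abs_le hX (hm.mul he.inv) hmdiv)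
    _ = ∫ ω, p (X ω) * q (X ω) * (e (X ω))⁻¹ ∂μ
          - ∫ ω, p (X ω) * (m (X ω) * (e (X ω))⁻¹) ∂μ + ∫ ω, m (X ω) ∂μ := by
        rw [hYI.integral_mul_eq (g := fun x => (e x)⁻¹) he.inv hinv,
          hI.integral_mul_eq (g := fun x => m x * (e x)⁻¹) (hm.mul he.inv) hmdiv]
    _ = ∫ ω, (p (X ω) * q (X ω) * (e (X ω))⁻¹ - p (X ω) * (m (X ω) * (e (X ω))⁻¹)
          + m (X ω)) ∂μ := by
        rw [integral_add _ hmi, integral_sub]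
        · exact hpqi.mul_comp_of_abs_le hX he.inv hinv
        · exact hpi.mul_comp_of_abs_le hX (hm.mul he.inv) hmdiv
        · exact (hpqi.mul_comp_of_abs_le hX he.inv hinv).sub
            (hpi.mul_comp_of_abs_le hX (hm.mul he.inv) hmdiv)
    _ = ∫ ω, q (X ω) ∂μ := by
        have hbias (x : β) : p x * q x * (e x)⁻¹ - p x * (m x * (e x)⁻¹) + m x
            = q x + (p x - e x) * (q x - m x) / e x := by
          field_simp [he0 x]; ring
        simp only [hbias]
        refine integral_congr_ae ?_
        rcases hcase with hc | hc <;> filter_upwards [hc] with ω hω <;> simp [hω]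

end CondExpEq

theorem AIPW_double_robust_general
    {Ω : Type*} [MeasurableSpace Ω]
    (μ : Measure Ω) [IsProbabilityMeasure μ] {p : ℕ}
    (X : Ω → (Fin p → ℝ)) (A Y : Ω → ℝ)
    (π πm : ℝ → (Fin p → ℝ) → ℝ) (Q Qm : (Fin p → ℝ) → ℝ → ℝ) (τ C : ℝ)
    (hX : Measurable X) (hA : Measurable A) (hY : Measurable Y)
    (hYbd : ∀ ω, |Y ω| ≤ C)
    (hτ : 0 < τ)
    -- true propensity: bounded away from 0 and 1, and P(A = a | X = x) = π(a;x)
    (hπpos : ∀ a x, (a = 1 ∨ a = -1) → τ < π a x ∧ π a x < 1 - τ)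
    (hπmeas : ∀ a, Measurable (π a))
    (hπ : ∀ a, (a = 1 ∨ a = -1) → ∀ h : (Fin p → ℝ) → ℝ, Measurable h → (∀ x, |h x| ≤ 1) →
      ∫ ω, (if A ω = a then (1:ℝ) else 0) * h (X ω) ∂μ = ∫ ω, π a (X ω) * h (X ω) ∂μ)
    -- true outcome regression: Q(x,a) = E[Y | X = x, A = a]
    (hQmeas : ∀ a, Measurable (fun x => Q x a))
    (hQbd : ∀ x a, |Q x a| ≤ C)
    (hQ : ∀ a, (a = 1 ∨ a = -1) → ∀ h : (Fin p → ℝ) → ℝ, Measurable h → (∀ x, |h x| ≤ 1) →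
      ∫ ω, Y ω * (if A ω = a then (1:ℝ) else 0) * h (X ω) ∂μ
        = ∫ ω, π a (X ω) * Q (X ω) a * h (X ω) ∂μ)
    -- working models: bounded, measurable, π^m bounded away from 0 and 1
    (hπm : ∀ a x, (a = 1 ∨ a = -1) → τ < πm a x ∧ πm a x < 1 - τ)
    (hπmmeas : ∀ a, Measurable (πm a))
    (hQmmeas : ∀ a, Measurable (fun x => Qm x a))
    (hQmbd : ∀ x a, |Qm x a| ≤ C)
    -- either model is correctly specified (almost everywhere)
    (hcase : (∀ᵐ ω ∂μ, ∀ a, (a = 1 ∨ a = -1) → πm a (X ω) = π a (X ω))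
           ∨ (∀ᵐ ω ∂μ, ∀ a, (a = 1 ∨ a = -1) → Qm (X ω) a = Q (X ω) a))
    -- the treatment rule
    (d : (Fin p → ℝ) → ℝ) (hd : Measurable d) (hdval : ∀ x, d x = 1 ∨ d x = -1) :
    ∫ ω, (Y ω * (if A ω = d (X ω) then (1:ℝ) else 0) / πm (A ω) (X ω)
          - ((if A ω = d (X ω) then (1:ℝ) else 0) - πm (d (X ω)) (X ω))
              / πm (d (X ω)) (X ω) * Qm (X ω) (d (X ω))) ∂μ
      = ∫ ω, Q (X ω) (d (X ω)) ∂μ := by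
  have hIi (a : ℝ) : Integrable (fun ω => if A ω = a then (1 : ℝ) else 0) μ :=
    integrable_of_abs_le (measurable_indicator_eq hA a) fun _ => abs_indicator_eq_le
  have hYIi (a : ℝ) : Integrable (fun ω => Y ω * if A ω = a then (1 : ℝ) else 0) μ :=
    (hIi a).bdd_mul hY.aestronglyMeasurable (.of_forall hYbd)
  have hpi (a) (ha : a = 1 ∨ a = -1) : Integrable (fun ω => π a (X ω)) μ :=
    integrable_of_abs_le (B := 1) ((hπmeas a).comp hX) fun ω =>
      abs_le.mpr ⟨by linarith [hπpos a (X ω) ha], by linarith [hπpos a (X ω) ha]⟩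
  have hpqi (a) (ha : a = 1 ∨ a = -1) : Integrable (fun ω => π a (X ω) * Q (X ω) a) μ :=
    (hpi a ha).mul_comp_of_abs_le hX (hQmeas a) fun x => hQbd x a
  have hI := condExpEq_apply_sign hπ (fun a _ => hIi a) hpi hX hd hdval
  have hYI := condExpEq_apply_sign hQ (fun a _ => hYIi a) hpqi hX hd hdval
  have hAd (ω) : Y ω * (if A ω = d (X ω) then (1:ℝ) else 0) / πm (A ω) (X ω)
      = Y ω * (if A ω = d (X ω) then (1:ℝ) else 0) / πm (d (X ω)) (X ω) := by
    split_ifs with h <;> simp [h]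
  simp only [hAd]
  have hdX : Measurable fun ω => d (X ω) := hd.comp hX
  have hdX1 (ω : Ω) : d (X ω) = 1 ∨ d (X ω) = -1 := hdval (X ω)
  refine integral_aipw_eq (p := fun x => π (d x) x) (q := fun x => Q x (d x))
    (e := fun x => πm (d x) x) (m := fun x => Qm x (d x)) hX hI hYI
    (integrable_apply_sign (fun a _ => hIi a) hdX hdX1)
    (integrable_apply_sign (fun a _ => hYIi a) hdX hdX1)
    (integrable_apply_sign hpi hdX hdX1)
    (integrable_apply_sign hpqi hdX hdX1)
    (measurable_apply_sign (fun a _ => hπmmeas a) hd hdval)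
    (measurable_apply_sign (f := fun a x => Qm x a) (fun a _ => hQmmeas a) hd hdval)
    hτ (fun x => (hπm _ x (hdval x)).1.le) (fun x => hQmbd x _) ?_
  exact hcase.imp (·.mono fun ω hω => hω _ (hdX1 ω)) (·.mono fun ω hω => hω _ (hdX1 ω))

/-- If either the working propensity `π^m` equals the true propensity `π`
almost everywhere, or the working outcome regression `Q^m` equals the true `Q` almost
everywhere, then the population AIPW value
`V^{AIPWE,m}(d) = E[ Y·1{A=d(X)}/π^m(A;X) − (1{A=d(X)} − π^m(d(X);X))/π^m(d(X);X)·Q^m(X,d(X)) ]`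
equals the true value `V(d) = E[Q(X, d(X))]`. -/
theorem AIPW_double_robust
    {Ω : Type*} [MeasurableSpace Ω]
    (μ : Measure Ω) [IsProbabilityMeasure μ] {p : ℕ}
    (X : Ω → (Fin p → ℝ)) (A Y : Ω → ℝ)
    (π πm : ℝ → (Fin p → ℝ) → ℝ) (Q Qm : (Fin p → ℝ) → ℝ → ℝ) (τ C : ℝ)
    (hX : Measurable X) (hA : Measurable A) (hY : Measurable Y)
    (hAval : ∀ ω, A ω = 1 ∨ A ω = -1)
    (hYbd : ∀ ω, |Y ω| ≤ C)
    (hτ : 0 < τ)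
    -- true propensity: bounded away from 0 and 1, and P(A = a | X = x) = π(a;x)
    (hπpos : ∀ a x, (a = 1 ∨ a = -1) → τ < π a x ∧ π a x < 1 - τ)
    (hπmeas : ∀ a, Measurable (π a))
    (hπ : ∀ a, (a = 1 ∨ a = -1) → ∀ h : (Fin p → ℝ) → ℝ, Measurable h → (∀ x, |h x| ≤ 1) →
      ∫ ω, (if A ω = a then (1:ℝ) else 0) * h (X ω) ∂μ = ∫ ω, π a (X ω) * h (X ω) ∂μ)
    -- true outcome regression: Q(x,a) = E[Y | X = x, A = a]
    (hQmeas : ∀ a, Measurable (fun x => Q x a))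
    (hQbd : ∀ x a, |Q x a| ≤ C)
    (hQ : ∀ a, (a = 1 ∨ a = -1) → ∀ h : (Fin p → ℝ) → ℝ, Measurable h → (∀ x, |h x| ≤ 1) →
      ∫ ω, Y ω * (if A ω = a then (1:ℝ) else 0) * h (X ω) ∂μ
        = ∫ ω, π a (X ω) * Q (X ω) a * h (X ω) ∂μ)
    -- working models: bounded, measurable, π^m bounded away from 0 and 1
    (hπm : ∀ a x, (a = 1 ∨ a = -1) → τ < πm a x ∧ πm a x < 1 - τ)
    (hπmmeas : ∀ a, Measurable (πm a))
    (hQmmeas : ∀ a, Measurable (fun x => Qm x a))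
    (hQmbd : ∀ x a, |Qm x a| ≤ C)
    -- either model is correctly specified (almost everywhere)
    (hcase : (∀ᵐ ω ∂μ, ∀ a, (a = 1 ∨ a = -1) → πm a (X ω) = π a (X ω))
           ∨ (∀ᵐ ω ∂μ, ∀ a, (a = 1 ∨ a = -1) → Qm (X ω) a = Q (X ω) a))
    -- the treatment rule
    (d : (Fin p → ℝ) → ℝ) (hd : Measurable d) (hdval : ∀ x, d x = 1 ∨ d x = -1) :
    ∫ ω, (Y ω * (if A ω = d (X ω) then (1:ℝ) else 0) / πm (A ω) (X ω)
          - ((if A ω = d (X ω) then (1:ℝ) else 0) - πm (d (X ω)) (X ω))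
              / πm (d (X ω)) (X ω) * Qm (X ω) (d (X ω))) ∂μ
      = ∫ ω, Q (X ω) (d (X ω)) ∂μ :=
  AIPW_double_robust_general μ X A Y π πm Q Qm τ C hX hA hY hYbd hτ hπpos hπmeas hπ hQmeas hQbd hQ
    hπm hπmmeas hQmmeas hQmbd hcase d hd hdval
end

section
/- The AIPW value estimator is doubly robust: if π^m = π but Q^m is arbitrary (bounded), then V^{AIPWE,m}(d) = V(d); symmetrically, if Q^m = Q but π^m is arbitrary (bounded away from 0 and 1), then V^{AIPWE,m}(d) = V(d). In the first case the augmentation term E[ (1{A=d(X)} − π(d(X);X))/π(d(X);X) · Q^m(X,d(X)) ] equals zero. -/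
open MeasureTheory

/-- The AIPW value estimator is doubly robust: if `π^m = π` (with `Q^m`
arbitrary bounded) then `V^{AIPWE,m}(d) = V(d)`; symmetrically if `Q^m = Q` (with `π^m`
arbitrary bounded away from 0 and 1) then `V^{AIPWE,m}(d) = V(d)`.  Moreover, in the first
case the augmentation term `E[ (1{A=d(X)} − π(d(X);X))/π(d(X);X) · Q^m(X,d(X)) ]` is zero. -/
theorem AIPW_doubly_robust_both_cases
    {Ω : Type*} [MeasurableSpace Ω]
    (μ : Measure Ω) [IsProbabilityMeasure μ] {p : ℕ}
    (X : Ω → (Fin p → ℝ)) (A Y : Ω → ℝ)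
    (π πm : ℝ → (Fin p → ℝ) → ℝ) (Q Qm : (Fin p → ℝ) → ℝ → ℝ) (τ C : ℝ)
    (hX : Measurable X) (hA : Measurable A) (hY : Measurable Y)
    (hAval : ∀ ω, A ω = 1 ∨ A ω = -1)
    (hYbd : ∀ ω, |Y ω| ≤ C)
    (hτ : 0 < τ)
    -- true propensity, bounded in (τ, 1-τ)
    (hπpos : ∀ a x, (a = 1 ∨ a = -1) → τ < π a x ∧ π a x < 1 - τ)
    (hπmeas : ∀ a, Measurable (π a))
    (hπ : ∀ a, (a = 1 ∨ a = -1) → ∀ h : (Fin p → ℝ) → ℝ, Measurable h → (∀ x, |h x| ≤ 1) →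
      ∫ ω, (if A ω = a then (1:ℝ) else 0) * h (X ω) ∂μ = ∫ ω, π a (X ω) * h (X ω) ∂μ)
    -- true outcome regression Q(x,a) = E[Y | X = x, A = a]
    (hQmeas : ∀ a, Measurable (fun x => Q x a))
    (hQbd : ∀ x a, |Q x a| ≤ C)
    (hQ : ∀ a, (a = 1 ∨ a = -1) → ∀ h : (Fin p → ℝ) → ℝ, Measurable h → (∀ x, |h x| ≤ 1) →
      ∫ ω, Y ω * (if A ω = a then (1:ℝ) else 0) * h (X ω) ∂μ
        = ∫ ω, π a (X ω) * Q (X ω) a * h (X ω) ∂μ)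
    -- working models: bounded measurable, π^m bounded in (τ, 1-τ)
    (hπm : ∀ a x, (a = 1 ∨ a = -1) → τ < πm a x ∧ πm a x < 1 - τ)
    (hπmmeas : ∀ a, Measurable (πm a))
    (hQmmeas : ∀ a, Measurable (fun x => Qm x a))
    (hQmbd : ∀ x a, |Qm x a| ≤ C)
    -- the treatment rule
    (d : (Fin p → ℝ) → ℝ) (hd : Measurable d) (hdval : ∀ x, d x = 1 ∨ d x = -1) :
    -- (i) correct propensity, arbitrary Q^m
    ((∀ a x, (a = 1 ∨ a = -1) → πm a x = π a x) →
      ∫ ω, (Y ω * (if A ω = d (X ω) then (1:ℝ) else 0) / πm (A ω) (X ω)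
            - ((if A ω = d (X ω) then (1:ℝ) else 0) - πm (d (X ω)) (X ω))
                / πm (d (X ω)) (X ω) * Qm (X ω) (d (X ω))) ∂μ
        = ∫ ω, Q (X ω) (d (X ω)) ∂μ)
    ∧
    -- (ii) correct outcome model, arbitrary π^m
    ((∀ x a, (a = 1 ∨ a = -1) → Qm x a = Q x a) →
      ∫ ω, (Y ω * (if A ω = d (X ω) then (1:ℝ) else 0) / πm (A ω) (X ω)
            - ((if A ω = d (X ω) then (1:ℝ) else 0) - πm (d (X ω)) (X ω))
                / πm (d (X ω)) (X ω) * Qm (X ω) (d (X ω))) ∂μ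
        = ∫ ω, Q (X ω) (d (X ω)) ∂μ)
    ∧
    -- (iii) under the correct propensity, the augmentation term has mean zero
    ((∀ a x, (a = 1 ∨ a = -1) → πm a x = π a x) →
      ∫ ω, ((if A ω = d (X ω) then (1:ℝ) else 0) - π (d (X ω)) (X ω))
              / π (d (X ω)) (X ω) * Qm (X ω) (d (X ω)) ∂μ = 0) := by
  classical
  have hC0 : (0:ℝ) ≤ C := le_trans (abs_nonneg _) (hQmbd 0 1)
  -- bounded measurable functions are integrable
  have hbint : ∀ f : Ω → ℝ, Measurable f → ∀ B : ℝ, (∀ ω, |f ω| ≤ B) → Integrable f μ := by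
    intro f hf B hB
    exact (integrable_const B).mono' hf.aestronglyMeasurable
      (Filter.Eventually.of_forall fun ω => by simpa using hB ω)
  have hindmeas : ∀ a : ℝ, Measurable (fun ω => if A ω = a then (1:ℝ) else 0) := fun a =>
    Measurable.ite (hA (measurableSet_singleton a)) measurable_const measurable_const
  have hemeas : ∀ a : ℝ, Measurable (fun x : Fin p → ℝ => if d x = a then (1:ℝ) else 0) :=
    fun a => Measurable.ite (hd (measurableSet_singleton a)) measurable_const measurable_const
  have hindbd : ∀ (a : ℝ) (ω), |if A ω = a then (1:ℝ) else 0| ≤ 1 := by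
    intro a ω; split <;> norm_num
  have hebd : ∀ (a : ℝ) (x), |if d x = a then (1:ℝ) else 0| ≤ 1 := by
    intro a x; split <;> norm_num
  -- scaled versions of hQ and hπ
  have hQ' : ∀ a, (a = 1 ∨ a = -1) → ∀ g : (Fin p → ℝ) → ℝ, Measurable g → ∀ B : ℝ,
      (∀ x, |g x| ≤ B) →
      ∫ ω, Y ω * (if A ω = a then (1:ℝ) else 0) * g (X ω) ∂μ
        = ∫ ω, π a (X ω) * Q (X ω) a * g (X ω) ∂μ := by
    intro a ha g hg B hB
    have hB'pos : (0:ℝ) < max B 1 := lt_of_lt_of_le one_pos (le_max_right _ _)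
    have hB'ne : max B 1 ≠ 0 := ne_of_gt hB'pos
    have hbd : ∀ x, |g x / max B 1| ≤ 1 := by
      intro x
      rw [abs_div, abs_of_pos hB'pos, div_le_one hB'pos]
      exact (hB x).trans (le_max_left _ _)
    have h1 := hQ a ha (fun x => g x / max B 1) (hg.div_const _) hbd
    calc ∫ ω, Y ω * (if A ω = a then (1:ℝ) else 0) * g (X ω) ∂μ
        = ∫ ω, (max B 1) * (Y ω * (if A ω = a then (1:ℝ) else 0) * (g (X ω) / max B 1)) ∂μ := by
          congr 1; funext ω; field_simp; try split <;> ring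
      _ = (max B 1) * ∫ ω, Y ω * (if A ω = a then (1:ℝ) else 0) * (g (X ω) / max B 1) ∂μ :=
          integral_const_mul _ _
      _ = (max B 1) * ∫ ω, π a (X ω) * Q (X ω) a * (g (X ω) / max B 1) ∂μ := by rw [h1]
      _ = ∫ ω, (max B 1) * (π a (X ω) * Q (X ω) a * (g (X ω) / max B 1)) ∂μ :=
          (integral_const_mul _ _).symm
      _ = ∫ ω, π a (X ω) * Q (X ω) a * g (X ω) ∂μ := by
          congr 1; funext ω; field_simp; try split <;> ring
  have hπ' : ∀ a, (a = 1 ∨ a = -1) → ∀ g : (Fin p → ℝ) → ℝ, Measurable g → ∀ B : ℝ,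
      (∀ x, |g x| ≤ B) →
      ∫ ω, (if A ω = a then (1:ℝ) else 0) * g (X ω) ∂μ
        = ∫ ω, π a (X ω) * g (X ω) ∂μ := by
    intro a ha g hg B hB
    have hB'pos : (0:ℝ) < max B 1 := lt_of_lt_of_le one_pos (le_max_right _ _)
    have hB'ne : max B 1 ≠ 0 := ne_of_gt hB'pos
    have hbd : ∀ x, |g x / max B 1| ≤ 1 := by
      intro x
      rw [abs_div, abs_of_pos hB'pos, div_le_one hB'pos]
      exact (hB x).trans (le_max_left _ _)
    have h1 := hπ a ha (fun x => g x / max B 1) (hg.div_const _) hbd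
    calc ∫ ω, (if A ω = a then (1:ℝ) else 0) * g (X ω) ∂μ
        = ∫ ω, (max B 1) * ((if A ω = a then (1:ℝ) else 0) * (g (X ω) / max B 1)) ∂μ := by
          congr 1; funext ω; field_simp; try split <;> ring
      _ = (max B 1) * ∫ ω, (if A ω = a then (1:ℝ) else 0) * (g (X ω) / max B 1) ∂μ :=
          integral_const_mul _ _
      _ = (max B 1) * ∫ ω, π a (X ω) * (g (X ω) / max B 1) ∂μ := by rw [h1]
      _ = ∫ ω, (max B 1) * (π a (X ω) * (g (X ω) / max B 1)) ∂μ :=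
          (integral_const_mul _ _).symm
      _ = ∫ ω, π a (X ω) * g (X ω) ∂μ := by
          congr 1; funext ω; field_simp; try split <;> ring
  have hπne : ∀ a x, (a = 1 ∨ a = -1) → π a x ≠ 0 :=
    fun a x ha => ne_of_gt (lt_trans hτ (hπpos a x ha).1)
  -- generic facts about a propensity model pm bounded in (τ, 1-τ)
  have habs_pm : ∀ pm : ℝ → (Fin p → ℝ) → ℝ,
      (∀ a x, (a = 1 ∨ a = -1) → τ < pm a x ∧ pm a x < 1 - τ) →
      ∀ a x, (a = 1 ∨ a = -1) → τ ≤ |pm a x| := by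
    intro pm hpm a x ha
    rw [abs_of_pos (hτ.trans (hpm a x ha).1)]
    exact le_of_lt (hpm a x ha).1
  have hpmne : ∀ pm : ℝ → (Fin p → ℝ) → ℝ,
      (∀ a x, (a = 1 ∨ a = -1) → τ < pm a x ∧ pm a x < 1 - τ) →
      ∀ a x, (a = 1 ∨ a = -1) → pm a x ≠ 0 :=
    fun pm hpm a x ha => ne_of_gt (hτ.trans (hpm a x ha).1)
  have hg1bd : ∀ pm : ℝ → (Fin p → ℝ) → ℝ,
      (∀ a x, (a = 1 ∨ a = -1) → τ < pm a x ∧ pm a x < 1 - τ) →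
      ∀ a, (a = 1 ∨ a = -1) → ∀ x, |(if d x = a then (1:ℝ) else 0) / pm a x| ≤ 1 / τ := by
    intro pm hpm a ha x
    rw [abs_div]
    exact div_le_div₀ zero_le_one (hebd a x) hτ (habs_pm pm hpm a x ha)
  have hg2bd : ∀ pm : ℝ → (Fin p → ℝ) → ℝ,
      (∀ a x, (a = 1 ∨ a = -1) → τ < pm a x ∧ pm a x < 1 - τ) →
      ∀ a, (a = 1 ∨ a = -1) → ∀ x,
        |(if d x = a then (1:ℝ) else 0) * Qm x a / pm a x| ≤ C / τ := by
    intro pm hpm a ha x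
    rw [abs_div]
    refine div_le_div₀ hC0 ?_ hτ (habs_pm pm hpm a x ha)
    calc |(if d x = a then (1:ℝ) else 0) * Qm x a|
        = |(if d x = a then (1:ℝ) else 0)| * |Qm x a| := abs_mul _ _
      _ ≤ 1 * C := mul_le_mul (hebd a x) (hQmbd x a) (abs_nonneg _) zero_le_one
      _ = C := one_mul C
  -- integrability of the pieces
  have hI1 : ∀ pm : ℝ → (Fin p → ℝ) → ℝ,
      (∀ a x, (a = 1 ∨ a = -1) → τ < pm a x ∧ pm a x < 1 - τ) →
      (∀ a, Measurable (pm a)) → ∀ a, (a = 1 ∨ a = -1) →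
      Integrable (fun ω => Y ω * (if A ω = a then (1:ℝ) else 0)
        * ((if d (X ω) = a then (1:ℝ) else 0) / pm a (X ω))) μ := by
    intro pm hpm hpmm a ha
    refine hbint _ ((hY.mul (hindmeas a)).mul (((hemeas a).div (hpmm a)).comp hX))
      (C * (1 / τ)) fun ω => ?_
    rw [abs_mul, abs_mul]
    have h1 : |Y ω| * |if A ω = a then (1:ℝ) else 0| ≤ C * 1 :=
      mul_le_mul (hYbd ω) (hindbd a ω) (abs_nonneg _) hC0
    have h2 := hg1bd pm hpm a ha (X ω)
    calc |Y ω| * |if A ω = a then (1:ℝ) else 0| * |(if d (X ω) = a then (1:ℝ) else 0) / pm a (X ω)|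
        ≤ C * 1 * (1 / τ) := mul_le_mul h1 h2 (abs_nonneg _) (by positivity)
      _ = C * (1 / τ) := by ring
  have hI2 : ∀ pm : ℝ → (Fin p → ℝ) → ℝ,
      (∀ a x, (a = 1 ∨ a = -1) → τ < pm a x ∧ pm a x < 1 - τ) →
      (∀ a, Measurable (pm a)) → ∀ a, (a = 1 ∨ a = -1) →
      Integrable (fun ω => (if A ω = a then (1:ℝ) else 0)
        * ((if d (X ω) = a then (1:ℝ) else 0) * Qm (X ω) a / pm a (X ω))) μ := by
    intro pm hpm hpmm a ha
    refine hbint _ ((hindmeas a).mul ((((hemeas a).mul (hQmmeas a)).div (hpmm a)).comp hX))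
      (1 * (C / τ)) fun ω => ?_
    rw [abs_mul]
    exact mul_le_mul (hindbd a ω) (hg2bd pm hpm a ha (X ω)) (abs_nonneg _) zero_le_one
  have hIeQm : ∀ a : ℝ, Integrable (fun ω => (if d (X ω) = a then (1:ℝ) else 0) * Qm (X ω) a) μ := by
    intro a
    refine hbint _ (((hemeas a).mul (hQmmeas a)).comp hX) (1 * C) fun ω => ?_
    rw [abs_mul]
    exact mul_le_mul (hebd a (X ω)) (hQmbd (X ω) a) (abs_nonneg _) zero_le_one
  have hIeQ : ∀ a : ℝ, Integrable (fun ω => (if d (X ω) = a then (1:ℝ) else 0) * Q (X ω) a) μ := by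
    intro a
    refine hbint _ (((hemeas a).mul (hQmeas a)).comp hX) (1 * C) fun ω => ?_
    rw [abs_mul]
    exact mul_le_mul (hebd a (X ω)) (hQbd (X ω) a) (abs_nonneg _) zero_le_one
  -- the two hπ'-instances used for the second pieces
  have heq2 : ∀ pm : ℝ → (Fin p → ℝ) → ℝ,
      (∀ a x, (a = 1 ∨ a = -1) → τ < pm a x ∧ pm a x < 1 - τ) →
      (∀ a, Measurable (pm a)) → ∀ a, (a = 1 ∨ a = -1) →
      ∫ ω, (if A ω = a then (1:ℝ) else 0)
          * ((if d (X ω) = a then (1:ℝ) else 0) * Qm (X ω) a / pm a (X ω)) ∂μ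
        = ∫ ω, π a (X ω) * ((if d (X ω) = a then (1:ℝ) else 0) * Qm (X ω) a / pm a (X ω)) ∂μ :=
    fun pm hpm hpmm a ha => hπ' a ha (fun x => (if d x = a then (1:ℝ) else 0) * Qm x a / pm a x)
      (((hemeas a).mul (hQmmeas a)).div (hpmm a)) (C / τ) (hg2bd pm hpm a ha)
  have heq1 : ∀ pm : ℝ → (Fin p → ℝ) → ℝ,
      (∀ a x, (a = 1 ∨ a = -1) → τ < pm a x ∧ pm a x < 1 - τ) →
      (∀ a, Measurable (pm a)) → ∀ a, (a = 1 ∨ a = -1) →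
      ∫ ω, Y ω * (if A ω = a then (1:ℝ) else 0)
          * ((if d (X ω) = a then (1:ℝ) else 0) / pm a (X ω)) ∂μ
        = ∫ ω, π a (X ω) * Q (X ω) a * ((if d (X ω) = a then (1:ℝ) else 0) / pm a (X ω)) ∂μ :=
    fun pm hpm hpmm a ha => hQ' a ha (fun x => (if d x = a then (1:ℝ) else 0) / pm a x)
      ((hemeas a).div (hpmm a)) (1 / τ) (hg1bd pm hpm a ha)
  -- the key decomposition of the AIPW integrand
  have key : ∫ ω, (Y ω * (if A ω = d (X ω) then (1:ℝ) else 0) / πm (A ω) (X ω)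
            - ((if A ω = d (X ω) then (1:ℝ) else 0) - πm (d (X ω)) (X ω))
                / πm (d (X ω)) (X ω) * Qm (X ω) (d (X ω))) ∂μ
      = ((∫ ω, π 1 (X ω) * Q (X ω) 1 * ((if d (X ω) = 1 then (1:ℝ) else 0) / πm 1 (X ω)) ∂μ)
          - (∫ ω, π 1 (X ω) * ((if d (X ω) = 1 then (1:ℝ) else 0) * Qm (X ω) 1 / πm 1 (X ω)) ∂μ)
          + ∫ ω, (if d (X ω) = 1 then (1:ℝ) else 0) * Qm (X ω) 1 ∂μ)
        + ((∫ ω, π (-1) (X ω) * Q (X ω) (-1) * ((if d (X ω) = -1 then (1:ℝ) else 0) / πm (-1) (X ω)) ∂μ)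
          - (∫ ω, π (-1) (X ω) * ((if d (X ω) = -1 then (1:ℝ) else 0) * Qm (X ω) (-1) / πm (-1) (X ω)) ∂μ)
          + ∫ ω, (if d (X ω) = -1 then (1:ℝ) else 0) * Qm (X ω) (-1) ∂μ) := by
    have hsplit : ∀ ω, Y ω * (if A ω = d (X ω) then (1:ℝ) else 0) / πm (A ω) (X ω)
            - ((if A ω = d (X ω) then (1:ℝ) else 0) - πm (d (X ω)) (X ω))
                / πm (d (X ω)) (X ω) * Qm (X ω) (d (X ω))
        = (Y ω * (if A ω = 1 then (1:ℝ) else 0) * ((if d (X ω) = 1 then (1:ℝ) else 0) / πm 1 (X ω))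
            - (if A ω = 1 then (1:ℝ) else 0) * ((if d (X ω) = 1 then (1:ℝ) else 0) * Qm (X ω) 1 / πm 1 (X ω))
            + (if d (X ω) = 1 then (1:ℝ) else 0) * Qm (X ω) 1)
          + (Y ω * (if A ω = -1 then (1:ℝ) else 0) * ((if d (X ω) = -1 then (1:ℝ) else 0) / πm (-1) (X ω))
            - (if A ω = -1 then (1:ℝ) else 0) * ((if d (X ω) = -1 then (1:ℝ) else 0) * Qm (X ω) (-1) / πm (-1) (X ω))
            + (if d (X ω) = -1 then (1:ℝ) else 0) * Qm (X ω) (-1)) := by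
      intro ω
      have h1 : πm 1 (X ω) ≠ 0 := hpmne πm hπm 1 (X ω) (Or.inl rfl)
      have h2 : πm (-1) (X ω) ≠ 0 := hpmne πm hπm (-1) (X ω) (Or.inr rfl)
      rcases hdval (X ω) with hdx | hdx <;> rcases hAval ω with hax | hax <;>
        rw [hdx, hax] <;> norm_num <;> field_simp <;> ring
    have hIsub : ∀ a, (a = 1 ∨ a = -1) → Integrable (fun ω =>
        Y ω * (if A ω = a then (1:ℝ) else 0) * ((if d (X ω) = a then (1:ℝ) else 0) / πm a (X ω))
          - (if A ω = a then (1:ℝ) else 0)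
              * ((if d (X ω) = a then (1:ℝ) else 0) * Qm (X ω) a / πm a (X ω))) μ :=
      fun a ha => (hI1 πm hπm hπmmeas a ha).sub (hI2 πm hπm hπmmeas a ha)
    have hIb : ∀ a, (a = 1 ∨ a = -1) → Integrable (fun ω =>
        Y ω * (if A ω = a then (1:ℝ) else 0) * ((if d (X ω) = a then (1:ℝ) else 0) / πm a (X ω))
          - (if A ω = a then (1:ℝ) else 0)
              * ((if d (X ω) = a then (1:ℝ) else 0) * Qm (X ω) a / πm a (X ω))
          + (if d (X ω) = a then (1:ℝ) else 0) * Qm (X ω) a) μ :=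
      fun a ha => (hIsub a ha).add (hIeQm a)
    rw [integral_congr_ae (Filter.Eventually.of_forall hsplit)]
    rw [integral_add (hIb 1 (Or.inl rfl)) (hIb (-1) (Or.inr rfl)),
      integral_add (hIsub 1 (Or.inl rfl)) (hIeQm 1),
      integral_add (hIsub (-1) (Or.inr rfl)) (hIeQm (-1)),
      integral_sub (hI1 πm hπm hπmmeas 1 (Or.inl rfl)) (hI2 πm hπm hπmmeas 1 (Or.inl rfl)),
      integral_sub (hI1 πm hπm hπmmeas (-1) (Or.inr rfl)) (hI2 πm hπm hπmmeas (-1) (Or.inr rfl)),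
      heq1 πm hπm hπmmeas 1 (Or.inl rfl), heq1 πm hπm hπmmeas (-1) (Or.inr rfl),
      heq2 πm hπm hπmmeas 1 (Or.inl rfl), heq2 πm hπm hπmmeas (-1) (Or.inr rfl)]
  -- decomposition of the target value
  have hQd : ∫ ω, Q (X ω) (d (X ω)) ∂μ
      = (∫ ω, (if d (X ω) = 1 then (1:ℝ) else 0) * Q (X ω) 1 ∂μ)
        + ∫ ω, (if d (X ω) = -1 then (1:ℝ) else 0) * Q (X ω) (-1) ∂μ := by
    have hpoint : ∀ ω, Q (X ω) (d (X ω))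
        = (if d (X ω) = 1 then (1:ℝ) else 0) * Q (X ω) 1
          + (if d (X ω) = -1 then (1:ℝ) else 0) * Q (X ω) (-1) := by
      intro ω
      rcases hdval (X ω) with h | h <;> rw [h] <;> norm_num
    rw [integral_congr_ae (Filter.Eventually.of_forall hpoint),
      integral_add (hIeQ 1) (hIeQ (-1))]
  refine ⟨?_, ?_, ?_⟩
  · -- (i) correct propensity
    intro hm
    rw [key, hQd]
    have p1 : ∀ ω, π 1 (X ω) * Q (X ω) 1 * ((if d (X ω) = 1 then (1:ℝ) else 0) / πm 1 (X ω))
        = (if d (X ω) = 1 then (1:ℝ) else 0) * Q (X ω) 1 := by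
      intro ω; rw [hm 1 (X ω) (Or.inl rfl)]
      have h := hπne 1 (X ω) (Or.inl rfl)
      field_simp; try ring
    have p2 : ∀ ω, π (-1) (X ω) * Q (X ω) (-1) * ((if d (X ω) = -1 then (1:ℝ) else 0) / πm (-1) (X ω))
        = (if d (X ω) = -1 then (1:ℝ) else 0) * Q (X ω) (-1) := by
      intro ω; rw [hm (-1) (X ω) (Or.inr rfl)]
      have h := hπne (-1) (X ω) (Or.inr rfl)
      field_simp; try ring
    have q1 : ∀ ω, π 1 (X ω) * ((if d (X ω) = 1 then (1:ℝ) else 0) * Qm (X ω) 1 / πm 1 (X ω))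
        = (if d (X ω) = 1 then (1:ℝ) else 0) * Qm (X ω) 1 := by
      intro ω; rw [hm 1 (X ω) (Or.inl rfl)]
      have h := hπne 1 (X ω) (Or.inl rfl)
      field_simp; try ring
    have q2 : ∀ ω, π (-1) (X ω) * ((if d (X ω) = -1 then (1:ℝ) else 0) * Qm (X ω) (-1) / πm (-1) (X ω))
        = (if d (X ω) = -1 then (1:ℝ) else 0) * Qm (X ω) (-1) := by
      intro ω; rw [hm (-1) (X ω) (Or.inr rfl)]
      have h := hπne (-1) (X ω) (Or.inr rfl)
      field_simp; try ring
    rw [integral_congr_ae (Filter.Eventually.of_forall p1),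
      integral_congr_ae (Filter.Eventually.of_forall p2),
      integral_congr_ae (Filter.Eventually.of_forall q1),
      integral_congr_ae (Filter.Eventually.of_forall q2)]
    ring
  · -- (ii) correct outcome model
    intro hm
    rw [key, hQd]
    have p1 : ∀ ω, π 1 (X ω) * Q (X ω) 1 * ((if d (X ω) = 1 then (1:ℝ) else 0) / πm 1 (X ω))
        = π 1 (X ω) * ((if d (X ω) = 1 then (1:ℝ) else 0) * Qm (X ω) 1 / πm 1 (X ω)) := by
      intro ω; rw [hm (X ω) 1 (Or.inl rfl)]; ring
    have p2 : ∀ ω, π (-1) (X ω) * Q (X ω) (-1) * ((if d (X ω) = -1 then (1:ℝ) else 0) / πm (-1) (X ω))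
        = π (-1) (X ω) * ((if d (X ω) = -1 then (1:ℝ) else 0) * Qm (X ω) (-1) / πm (-1) (X ω)) := by
      intro ω; rw [hm (X ω) (-1) (Or.inr rfl)]; ring
    have q1 : ∀ ω, (if d (X ω) = 1 then (1:ℝ) else 0) * Qm (X ω) 1
        = (if d (X ω) = 1 then (1:ℝ) else 0) * Q (X ω) 1 := by
      intro ω; rw [hm (X ω) 1 (Or.inl rfl)]
    have q2 : ∀ ω, (if d (X ω) = -1 then (1:ℝ) else 0) * Qm (X ω) (-1)
        = (if d (X ω) = -1 then (1:ℝ) else 0) * Q (X ω) (-1) := by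
      intro ω; rw [hm (X ω) (-1) (Or.inr rfl)]
    rw [integral_congr_ae (Filter.Eventually.of_forall p1),
      integral_congr_ae (Filter.Eventually.of_forall p2),
      integral_congr_ae (Filter.Eventually.of_forall q1),
      integral_congr_ae (Filter.Eventually.of_forall q2)]
    ring
  · -- (iii) augmentation term has mean zero
    intro _
    have hsplit3 : ∀ ω, ((if A ω = d (X ω) then (1:ℝ) else 0) - π (d (X ω)) (X ω))
            / π (d (X ω)) (X ω) * Qm (X ω) (d (X ω))
        = ((if A ω = 1 then (1:ℝ) else 0)
              * ((if d (X ω) = 1 then (1:ℝ) else 0) * Qm (X ω) 1 / π 1 (X ω))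
            - (if d (X ω) = 1 then (1:ℝ) else 0) * Qm (X ω) 1)
          + ((if A ω = -1 then (1:ℝ) else 0)
              * ((if d (X ω) = -1 then (1:ℝ) else 0) * Qm (X ω) (-1) / π (-1) (X ω))
            - (if d (X ω) = -1 then (1:ℝ) else 0) * Qm (X ω) (-1)) := by
      intro ω
      have h1 : π 1 (X ω) ≠ 0 := hπne 1 (X ω) (Or.inl rfl)
      have h2 : π (-1) (X ω) ≠ 0 := hπne (-1) (X ω) (Or.inr rfl)
      rcases hdval (X ω) with hdx | hdx <;> rcases hAval ω with hax | hax <;>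
        rw [hdx, hax] <;> norm_num <;> field_simp <;> try ring
    have hIsub3 : ∀ a, (a = 1 ∨ a = -1) → Integrable (fun ω =>
        (if A ω = a then (1:ℝ) else 0)
            * ((if d (X ω) = a then (1:ℝ) else 0) * Qm (X ω) a / π a (X ω))
          - (if d (X ω) = a then (1:ℝ) else 0) * Qm (X ω) a) μ :=
      fun a ha => (hI2 π hπpos hπmeas a ha).sub (hIeQm a)
    have q1 : ∀ ω, π 1 (X ω) * ((if d (X ω) = 1 then (1:ℝ) else 0) * Qm (X ω) 1 / π 1 (X ω))
        = (if d (X ω) = 1 then (1:ℝ) else 0) * Qm (X ω) 1 := by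
      intro ω
      have h := hπne 1 (X ω) (Or.inl rfl)
      field_simp; try ring
    have q2 : ∀ ω, π (-1) (X ω) * ((if d (X ω) = -1 then (1:ℝ) else 0) * Qm (X ω) (-1) / π (-1) (X ω))
        = (if d (X ω) = -1 then (1:ℝ) else 0) * Qm (X ω) (-1) := by
      intro ω
      have h := hπne (-1) (X ω) (Or.inr rfl)
      field_simp; try ring
    rw [integral_congr_ae (Filter.Eventually.of_forall hsplit3),
      integral_add (hIsub3 1 (Or.inl rfl)) (hIsub3 (-1) (Or.inr rfl)),
      integral_sub (hI2 π hπpos hπmeas 1 (Or.inl rfl)) (hIeQm 1),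
      integral_sub (hI2 π hπpos hπmeas (-1) (Or.inr rfl)) (hIeQm (-1)),
      heq2 π hπpos hπmeas 1 (Or.inl rfl), heq2 π hπpos hπmeas (-1) (Or.inr rfl),
      integral_congr_ae (Filter.Eventually.of_forall q1),
      integral_congr_ae (Filter.Eventually.of_forall q2)]
    ring
end

section
/- (Fisher consistency, hinge loss, pointwise form) Fix x and let w₁, w₋₁ > 0 be weights and s₁, s₋₁ ∈ {−1,1} signs with s₁ = sgn(c₁), s₋₁ = sgn(c₋₁) where c₁ = E[W_1 | X=x] and c₋₁ = E[W_{-1} | X=x]. Suppose c₁ ≠ c₋₁. Then any minimizer α* ∈ ℝ of g(α) = |c₁|·max(1 − sgn(c₁)α, 0) + |c₋₁|·max(1 + sgn(c₋₁)α, 0) satisfies sgn(α*) = sgn(c₁ − c₋₁). -/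
private lemma key_pos (a b : ℝ) (hb : 0 < b) (hab : b < a)
    (g : ℝ → ℝ)
    (hg : ∀ α, g α = a * max (1 - α) 0 + b * max (1 + α) 0)
    (αstar : ℝ) (hmin : ∀ α, g αstar ≤ g α) : 0 < αstar := by
  by_contra h
  push_neg at h
  have ha : 0 < a := hb.trans hab
  have h1 : g 1 = 2 * b := by rw [hg]; norm_num; ring_nf
  have h2 : a * (1 - αstar) + b * (1 + αstar) ≤ g αstar := by
    rw [hg]
    gcongr <;> exact le_max_left _ _
  have h3 : (a - b) * αstar ≤ 0 :=
    mul_nonpos_of_nonneg_of_nonpos (by linarith) h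
  have := hmin 1
  nlinarith

private lemma key_neg (a b : ℝ) (ha : 0 < a) (hab : a < b)
    (g : ℝ → ℝ)
    (hg : ∀ α, g α = a * max (1 - α) 0 + b * max (1 + α) 0)
    (αstar : ℝ) (hmin : ∀ α, g αstar ≤ g α) : αstar < 0 := by
  have := key_pos b a ha hab (fun β => g (-β))
    (by intro β; show g (-β) = _; rw [hg]
        have e1 : (1:ℝ) - -β = 1 + β := by ring
        have e2 : (1:ℝ) + -β = 1 - β := by ring
        rw [e1, e2]; ring_nf) (-αstar)
    (by intro α; simpa using hmin (-α))
  linarith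

/-- Fisher consistency, hinge loss, pointwise form: for nonzero reals
`c₁ ≠ c₋₁` (the conditional means `E[W_a | X = x]`), any minimizer `α⋆` of
`g(α) = |c₁|·max(1 − sgn(c₁)α, 0) + |c₋₁|·max(1 + sgn(c₋₁)α, 0)` satisfies
`sgn(α⋆) = sgn(c₁ − c₋₁)`. -/
theorem fisher_consistency_hinge_pointwise
    (c1 cm1 : ℝ) (hc1 : c1 ≠ 0) (hcm1 : cm1 ≠ 0) (hne : c1 ≠ cm1)
    (g : ℝ → ℝ)
    (hg : ∀ α, g α = |c1| * max (1 - Real.sign c1 * α) 0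
                    + |cm1| * max (1 + Real.sign cm1 * α) 0)
    (αstar : ℝ) (hmin : ∀ α, g αstar ≤ g α) :
    Real.sign αstar = Real.sign (c1 - cm1) := by
  rcases hc1.lt_or_gt with h1 | h1 <;> rcases hcm1.lt_or_gt with h2 | h2
  · -- c1 < 0, cm1 < 0
    have hs1 : Real.sign c1 = -1 := Real.sign_of_neg h1
    have hs2 : Real.sign cm1 = -1 := Real.sign_of_neg h2
    have hg' : ∀ α, g α = (-cm1) * max (1 - α) 0 + (-c1) * max (1 + α) 0 := by
      intro α
      rw [hg, hs1, hs2, abs_of_neg h1, abs_of_neg h2]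
      ring_nf
    rcases hne.lt_or_gt with h3 | h3
    · -- c1 < cm1, so -cm1 < -c1 : αstar < 0
      have := key_neg (-cm1) (-c1) (by linarith) (by linarith) g hg' αstar hmin
      rw [Real.sign_of_neg this, Real.sign_of_neg (by linarith : c1 - cm1 < 0)]
    · have := key_pos (-cm1) (-c1) (by linarith) (by linarith) g hg' αstar hmin
      rw [Real.sign_of_pos this, Real.sign_of_pos (by linarith : 0 < c1 - cm1)]
  · -- c1 < 0 < cm1
    have hs1 : Real.sign c1 = -1 := Real.sign_of_neg h1
    have hs2 : Real.sign cm1 = 1 := Real.sign_of_pos h2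
    have hg' : ∀ α, g α = (cm1 - c1) * max (1 + α) 0 := by
      intro α
      rw [hg, hs1, hs2, abs_of_neg h1, abs_of_pos h2]
      ring_nf
    have hge : 0 ≤ g αstar := by
      rw [hg']
      exact mul_nonneg (by linarith) (le_max_right _ _)
    have hle : g αstar ≤ 0 := by
      have h := hmin (-1)
      rw [hg' (-1)] at h
      norm_num at h
      exact h
    have hmax : max (1 + αstar) 0 = 0 := by
      have h0 : (cm1 - c1) * max (1 + αstar) 0 = 0 := by
        rw [← hg']; linarith
      rcases mul_eq_zero.1 h0 with h | h
      · exfalso; linarith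
      · exact h
    have hneg : αstar < 0 := by
      have := le_max_left (1 + αstar) 0
      rw [hmax] at this
      linarith
    rw [Real.sign_of_neg hneg, Real.sign_of_neg (by linarith : c1 - cm1 < 0)]
  · -- cm1 < 0 < c1
    have hs1 : Real.sign c1 = 1 := Real.sign_of_pos h1
    have hs2 : Real.sign cm1 = -1 := Real.sign_of_neg h2
    have hg' : ∀ α, g α = (c1 - cm1) * max (1 - α) 0 := by
      intro α
      rw [hg, hs1, hs2, abs_of_pos h1, abs_of_neg h2]
      ring_nf
    have hge : 0 ≤ g αstar := by
      rw [hg']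
      exact mul_nonneg (by linarith) (le_max_right _ _)
    have hle : g αstar ≤ 0 := by
      have h := hmin 1
      rw [hg' 1] at h
      norm_num at h
      exact h
    have hmax : max (1 - αstar) 0 = 0 := by
      have h0 : (c1 - cm1) * max (1 - αstar) 0 = 0 := by
        rw [← hg']; linarith
      rcases mul_eq_zero.1 h0 with h | h
      · exfalso; linarith
      · exact h
    have hpos : 0 < αstar := by
      have := le_max_left (1 - αstar) 0
      rw [hmax] at this
      linarith
    rw [Real.sign_of_pos hpos, Real.sign_of_pos (by linarith : 0 < c1 - cm1)]
  · -- 0 < c1, 0 < cm1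
    have hs1 : Real.sign c1 = 1 := Real.sign_of_pos h1
    have hs2 : Real.sign cm1 = 1 := Real.sign_of_pos h2
    have hg' : ∀ α, g α = c1 * max (1 - α) 0 + cm1 * max (1 + α) 0 := by
      intro α
      rw [hg, hs1, hs2, abs_of_pos h1, abs_of_pos h2]
      ring_nf
    rcases hne.lt_or_gt with h3 | h3
    · have := key_neg c1 cm1 h1 h3 g hg' αstar hmin
      rw [Real.sign_of_neg this, Real.sign_of_neg (by linarith : c1 - cm1 < 0)]
    · have := key_pos c1 cm1 h2 h3 g hg' αstar hmin
      rw [Real.sign_of_pos this, Real.sign_of_pos (by linarith : 0 < c1 - cm1)]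
end

section
/- (Fisher consistency, exponential loss, pointwise form) Let c₁, c₋₁ be nonzero reals with c₁ ≠ c₋₁ and consider g(α) = |c₁|·exp(−sgn(c₁)α) + |c₋₁|·exp(sgn(c₋₁)α). If c₁, c₋₁ > 0, then g is strictly convex, has a unique minimizer α* = (1/2)·log(c₁/c₋₁), and sgn(α*) = sgn(c₁ − c₋₁). -/
/-!
With `α⋆ = log (c₁ / c₋₁) / 2` one has `c₁ e^{-α} + c₋₁ e^{α} = 2 √(c₁ c₋₁) cosh (α - α⋆)`,
so `g α ≤ g β` exactly when `|α - α⋆| ≤ |β - α⋆|`; this gives both minimality and uniqueness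
of `α⋆`. Strict convexity is that of a positive combination of `e^{-α}` and `e^{α}`, and the
sign of `α⋆` is that of `c₁ / c₋₁ - 1` because `log` is increasing and vanishes at `1`.
-/

open Real Set

theorem Real.sign_eq_sign_of_pos_iff_of_neg_iff {x y : ℝ} (hpos : 0 < x ↔ 0 < y)
    (hneg : x < 0 ↔ y < 0) : Real.sign x = Real.sign y := by
  simp only [Real.sign, hpos, hneg]

theorem Real.sign_log_div_two {a b : ℝ} (ha : 0 < a) (hb : 0 < b) :
    Real.sign (log (a / b) / 2) = Real.sign (a - b) := by
  have hab : 0 < a / b := div_pos ha hb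
  apply Real.sign_eq_sign_of_pos_iff_of_neg_iff
  · rw [div_pos_iff_of_pos_right two_pos, log_pos_iff hab.le, one_lt_div hb, sub_pos]
  · rw [div_lt_iff₀ two_pos, zero_mul, log_neg_iff hab, div_lt_one hb, sub_neg]

theorem StrictConvexOn.const_mul {E : Type*} [AddCommMonoid E] [Module ℝ E] {s : Set E}
    {f : E → ℝ} {c : ℝ} (hc : 0 < c) (hf : StrictConvexOn ℝ s f) :
    StrictConvexOn ℝ s fun x => c * f x := by
  refine ⟨hf.1, fun x hx y hy hxy a b ha hb hab => ?_⟩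
  have := mul_lt_mul_of_pos_left (hf.2 hx hy hxy ha hb hab) hc
  simp only [smul_eq_mul] at this ⊢
  linarith

theorem strictConvexOn_exp_neg : StrictConvexOn ℝ univ fun x => exp (-x) := by
  refine ⟨convex_univ, fun x _ y _ hxy a b ha hb hab => ?_⟩
  have := strictConvexOn_exp.2 (mem_univ (-x)) (mem_univ (-y)) (neg_injective.ne hxy) ha hb hab
  simpa only [smul_eq_mul, mul_neg, neg_add] using this

theorem mul_exp_neg_add_mul_exp_eq_mul_cosh {a b : ℝ} (ha : 0 < a) (hb : 0 < b) (x : ℝ) :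
    a * exp (-x) + b * exp x = 2 * √(a * b) * cosh (x - log (a / b) / 2) := by
  set m := log (a / b) / 2
  have hm : b * (exp m * exp m) = a := by
    rw [← exp_add, add_halves, exp_log (div_pos ha hb)]
    field_simp
  have hsqrt : √(a * b) = b * exp m := by
    rw [sqrt_eq_iff_mul_self_eq_of_pos (by positivity)]
    linear_combination b * hm
  rw [hsqrt, cosh_eq, neg_sub, exp_sub, exp_sub, exp_neg]
  field_simp
  linear_combination -hm

theorem mul_exp_neg_add_mul_exp_le_iff {a b : ℝ} (ha : 0 < a) (hb : 0 < b) (x y : ℝ) :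
    a * exp (-x) + b * exp x ≤ a * exp (-y) + b * exp y ↔
      |x - log (a / b) / 2| ≤ |y - log (a / b) / 2| := by
  simp only [mul_exp_neg_add_mul_exp_eq_mul_cosh ha hb]
  rw [mul_le_mul_iff_right₀ (by positivity), cosh_le_cosh]

theorem fisher_consistency_exponential_pointwise_general
    (c1 cm1 : ℝ) (hc1 : 0 < c1) (hcm1 : 0 < cm1)
    (g : ℝ → ℝ)
    (hg : ∀ α, g α = |c1| * Real.exp (-(Real.sign c1 * α))
                    + |cm1| * Real.exp (Real.sign cm1 * α)) :
    StrictConvexOn ℝ Set.univ g ∧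
    (∀ α, g (Real.log (c1 / cm1) / 2) ≤ g α) ∧
    (∀ α, (∀ β, g α ≤ g β) → α = Real.log (c1 / cm1) / 2) ∧
    Real.sign (Real.log (c1 / cm1) / 2) = Real.sign (c1 - cm1) := by
  obtain rfl : g = fun α => c1 * exp (-α) + cm1 * exp α := by
    funext α
    rw [hg, Real.sign_of_pos hc1, Real.sign_of_pos hcm1, abs_of_pos hc1, abs_of_pos hcm1, one_mul]
  refine ⟨(strictConvexOn_exp_neg.const_mul hc1).add (strictConvexOn_exp.const_mul hcm1),
    fun α => ?_, fun α hα => ?_, Real.sign_log_div_two hc1 hcm1⟩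
  · simp only [mul_exp_neg_add_mul_exp_le_iff hc1 hcm1, sub_self, abs_zero, abs_nonneg]
  · have hdist := (mul_exp_neg_add_mul_exp_le_iff hc1 hcm1 _ _).1 (hα (log (c1 / cm1) / 2))
    rwa [sub_self, abs_zero, abs_nonpos_iff, sub_eq_zero] at hdist

/-- Fisher consistency, exponential loss, pointwise form: for
`c₁, c₋₁ > 0` with `c₁ ≠ c₋₁`, the function
`g(α) = |c₁|·exp(−sgn(c₁)α) + |c₋₁|·exp(sgn(c₋₁)α)` is strictly convex, has the unique
minimizer `α⋆ = (1/2)·log(c₁/c₋₁)`, and `sgn(α⋆) = sgn(c₁ − c₋₁)`. -/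
theorem fisher_consistency_exponential_pointwise
    (c1 cm1 : ℝ) (hc1 : 0 < c1) (hcm1 : 0 < cm1) (hne : c1 ≠ cm1)
    (g : ℝ → ℝ)
    (hg : ∀ α, g α = |c1| * Real.exp (-(Real.sign c1 * α))
                    + |cm1| * Real.exp (Real.sign cm1 * α)) :
    StrictConvexOn ℝ Set.univ g ∧
    (∀ α, g (Real.log (c1 / cm1) / 2) ≤ g α) ∧
    (∀ α, (∀ β, g α ≤ g β) → α = Real.log (c1 / cm1) / 2) ∧
    Real.sign (Real.log (c1 / cm1) / 2) = Real.sign (c1 - cm1) :=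
  fisher_consistency_exponential_pointwise_general c1 cm1 hc1 hcm1 g hg
end

section
/- (Fisher consistency, squared hinge loss, pointwise form) Let c₁, c₋₁ > 0 with c₁ ≠ c₋₁ and define g(α) = c₁·(max(1 − α, 0))² + c₋₁·(max(1 + α, 0))². Then g has a unique minimizer α* = (c₁ − c₋₁)/(c₁ + c₋₁) ∈ (−1,1), and sgn(α*) = sgn(c₁ − c₋₁). -/
/-- Fisher consistency, squared hinge loss, pointwise form: for
`c₁, c₋₁ > 0` with `c₁ ≠ c₋₁`, the function
`g(α) = c₁·(max(1 − α, 0))² + c₋₁·(max(1 + α, 0))²` has the unique minimizer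
`α⋆ = (c₁ − c₋₁)/(c₁ + c₋₁) ∈ (−1, 1)`, and `sgn(α⋆) = sgn(c₁ − c₋₁)`. -/
theorem fisher_consistency_squared_hinge_pointwise
    (c1 cm1 : ℝ) (hc1 : 0 < c1) (hcm1 : 0 < cm1) (hne : c1 ≠ cm1)
    (g : ℝ → ℝ)
    (hg : ∀ α, g α = c1 * (max (1 - α) 0) ^ 2 + cm1 * (max (1 + α) 0) ^ 2) :
    (c1 - cm1) / (c1 + cm1) ∈ Set.Ioo (-1 : ℝ) 1 ∧
    (∀ α, g ((c1 - cm1) / (c1 + cm1)) ≤ g α) ∧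
    (∀ α, (∀ β, g α ≤ g β) → α = (c1 - cm1) / (c1 + cm1)) ∧
    Real.sign ((c1 - cm1) / (c1 + cm1)) = Real.sign (c1 - cm1) := by
  set a := (c1 - cm1) / (c1 + cm1) with ha
  have hs : 0 < c1 + cm1 := by linarith
  have hmem : a ∈ Set.Ioo (-1 : ℝ) 1 := by
    constructor
    · rw [ha, lt_div_iff₀ hs]; nlinarith
    · rw [ha, div_lt_one hs]; linarith
  have h1p : 0 < 1 + a := by linarith [hmem.1]
  have h1m : 0 < 1 - a := by linarith [hmem.2]
  have haeq : a * (c1 + cm1) = c1 - cm1 := by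
    rw [ha, div_mul_cancel₀]; exact ne_of_gt hs
  -- value of g on [-1,1]
  have hq : ∀ α, -1 ≤ α → α ≤ 1 →
      g α = c1 * (1 - α) ^ 2 + cm1 * (1 + α) ^ 2 := by
    intro α h1 h2
    rw [hg, max_eq_left (by linarith), max_eq_left (by linarith)]
  have hga : g a = (c1 + cm1) * (1 - a ^ 2) := by
    rw [hq a hmem.1.le hmem.2.le]
    linear_combination 2 * a * haeq
  -- quadratic lower bound
  have hqa : ∀ α, g a ≤ c1 * (1 - α) ^ 2 + cm1 * (1 + α) ^ 2 := by
    intro α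
    rw [hga]
    nlinarith [mul_nonneg hs.le (sq_nonneg (α - a)), haeq]
  have hmin : ∀ α, g a ≤ g α := by
    intro α
    rcases le_total α (-1) with h | h
    · have hgα : g α = c1 * (1 - α) ^ 2 := by
        rw [hg, max_eq_left (by linarith), max_eq_right (by linarith)]
        ring
      have h1 : g a ≤ c1 * (1 - (-1:ℝ)) ^ 2 + cm1 * (1 + (-1:ℝ)) ^ 2 := hqa (-1)
      rw [hgα]
      nlinarith [mul_nonneg (by linarith : (0:ℝ) ≤ -(α+1)) (by linarith : (0:ℝ) ≤ 3 - α), hc1.le]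
    · rcases le_total α 1 with h2 | h2
      · rw [hq α h h2]; exact hqa α
      · have hgα : g α = cm1 * (1 + α) ^ 2 := by
          rw [hg, max_eq_right (by linarith), max_eq_left (by linarith)]
          ring
        have h1 : g a ≤ c1 * (1 - (1:ℝ)) ^ 2 + cm1 * (1 + (1:ℝ)) ^ 2 := hqa 1
        rw [hgα]
        nlinarith [mul_nonneg (by linarith : (0:ℝ) ≤ α - 1) (by linarith : (0:ℝ) ≤ α + 3), hcm1.le]
  refine ⟨hmem, hmin, ?_, ?_⟩
  · intro α hαmin
    have hle : g α ≤ g a := hαmin a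
    rw [hga] at hle
    rcases le_or_gt α (-1) with h | h
    · exfalso
      have hgα : g α = c1 * (1 - α) ^ 2 := by
        rw [hg, max_eq_left (by linarith), max_eq_right (by linarith)]
        ring
      rw [hgα] at hle
      -- g a = (c1+cm1)(1-a²) = 4c1 - (c1+cm1)(1+a)² < 4c1 ≤ c1(1-α)²
      nlinarith [mul_pos hs (mul_pos h1p h1p), haeq,
        mul_nonneg (by linarith : (0:ℝ) ≤ -(α+1)) (by linarith : (0:ℝ) ≤ 3 - α), hc1.le]
    · rcases lt_or_ge α 1 with h2 | h2
      · rw [hq α h.le h2.le] at hle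
        have h0 : (c1 + cm1) * (α - a) ^ 2 ≤ 0 := by nlinarith [haeq]
        have h3 : (α - a) ^ 2 = 0 := by
          rcases eq_or_lt_of_le (sq_nonneg (α - a)) with he | hlt
          · exact he.symm
          · exfalso; nlinarith [mul_pos hs hlt]
        have := pow_eq_zero_iff (n := 2) (by norm_num) |>.mp h3
        linarith [sub_eq_zero.mp this]
      · exfalso
        have hgα : g α = cm1 * (1 + α) ^ 2 := by
          rw [hg, max_eq_right (by linarith), max_eq_left (by linarith)]
          ring
        rw [hgα] at hle
        -- g a = 4cm1 - (c1+cm1)(1-a)² < 4cm1 ≤ cm1(1+α)²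
        nlinarith [mul_pos hs (mul_pos h1m h1m), haeq,
          mul_nonneg (by linarith : (0:ℝ) ≤ α - 1) (by linarith : (0:ℝ) ≤ α + 3), hcm1.le]
  · rcases hne.lt_or_gt with h | h
    · have h1 : c1 - cm1 < 0 := by linarith
      have h2 : a < 0 := div_neg_of_neg_of_pos h1 hs
      rw [Real.sign_of_neg h1, Real.sign_of_neg h2]
    · have h1 : 0 < c1 - cm1 := by linarith
      have h2 : 0 < a := div_pos h1 hs
      rw [Real.sign_of_pos h1, Real.sign_of_pos h2]
end

section
/- Let c₁, c₋₁ be positive reals and let φ(t) = max(1−t, 0). Then for any α ∈ ℝ, [c₁·1{α<0} + c₋₁·1{α≥0} − min(c₁,c₋₁)] ≤ [c₁·φ(α) + c₋₁·φ(−α) − inf_β (c₁φ(β) + c₋₁φ(−β))], i.e., the excess 0–1 risk is bounded by the excess hinge risk pointwise; here inf_β(c₁φ(β) + c₋₁φ(−β)) = 2·min(c₁,c₋₁). -/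
/-- pointwise excess-risk comparison for hinge loss: for positive
conditional weights `c₁, c₋₁` and any `α ∈ ℝ`, the excess 0–1 risk is bounded by the
excess hinge risk:
`c₁·1{α<0} + c₋₁·1{α≥0} − min(c₁,c₋₁) ≤ c₁·max(1−α,0) + c₋₁·max(1+α,0) − 2·min(c₁,c₋₁)`;
moreover `inf_β (c₁·max(1−β,0) + c₋₁·max(1+β,0)) = 2·min(c₁,c₋₁)`. -/
theorem excess_risk_comparison_hinge (c1 cm1 : ℝ) (hc1 : 0 < c1) (hcm1 : 0 < cm1) :
    (∀ α : ℝ,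
      c1 * (if α < 0 then (1:ℝ) else 0) + cm1 * (if 0 ≤ α then (1:ℝ) else 0) - min c1 cm1
        ≤ c1 * max (1 - α) 0 + cm1 * max (1 + α) 0 - 2 * min c1 cm1) ∧
    IsGLB (Set.range fun β : ℝ => c1 * max (1 - β) 0 + cm1 * max (1 + β) 0)
      (2 * min c1 cm1) := by
  constructor
  · intro α
    have h1 : 1 - α ≤ max (1 - α) 0 := le_max_left _ _
    have h2 : 1 + α ≤ max (1 + α) 0 := le_max_left _ _
    have h3 : (0:ℝ) ≤ max (1 - α) 0 := le_max_right _ _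
    have h4 : (0:ℝ) ≤ max (1 + α) 0 := le_max_right _ _
    rcases lt_or_ge α 0 with ha | ha
    · rw [if_pos ha, if_neg (not_le.2 ha)]
      rcases le_total c1 cm1 with h | h
      · rw [min_eq_left h]
        rcases le_total α (-1) with hb | hb <;>
          nlinarith [mul_le_mul_of_nonneg_left h1 hc1.le, mul_le_mul_of_nonneg_left h2 hcm1.le,
            mul_nonneg hc1.le h3, mul_nonneg hcm1.le h4]
      · rw [min_eq_right h]
        rcases le_total α (-1) with hb | hb <;>
          nlinarith [mul_le_mul_of_nonneg_left h1 hc1.le, mul_le_mul_of_nonneg_left h2 hcm1.le,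
            mul_nonneg hc1.le h3, mul_nonneg hcm1.le h4]
    · rw [if_neg (not_lt.2 ha), if_pos ha]
      rcases le_total c1 cm1 with h | h
      · rw [min_eq_left h]
        rcases le_total (1:ℝ) α with hb | hb <;>
          nlinarith [mul_le_mul_of_nonneg_left h1 hc1.le, mul_le_mul_of_nonneg_left h2 hcm1.le,
            mul_nonneg hc1.le h3, mul_nonneg hcm1.le h4]
      · rw [min_eq_right h]
        rcases le_total (1:ℝ) α with hb | hb <;>
          nlinarith [mul_le_mul_of_nonneg_left h1 hc1.le, mul_le_mul_of_nonneg_left h2 hcm1.le,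
            mul_nonneg hc1.le h3, mul_nonneg hcm1.le h4]
  · constructor
    · rintro x ⟨β, rfl⟩
      simp only
      have h1 : 1 - β ≤ max (1 - β) 0 := le_max_left _ _
      have h2 : 1 + β ≤ max (1 + β) 0 := le_max_left _ _
      have h3 : (0:ℝ) ≤ max (1 - β) 0 := le_max_right _ _
      have h4 : (0:ℝ) ≤ max (1 + β) 0 := le_max_right _ _
      rcases le_total c1 cm1 with h | h <;> [rw [min_eq_left h]; rw [min_eq_right h]] <;>
        nlinarith [mul_le_mul_of_nonneg_left h1 hc1.le, mul_le_mul_of_nonneg_left h2 hcm1.le,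
          mul_nonneg hc1.le h3, mul_nonneg hcm1.le h4]
    · intro x hx
      rcases le_total c1 cm1 with h | h
      · have := hx (Set.mem_range_self (-1))
        rw [min_eq_left h]
        norm_num at this
        linarith
      · have := hx (Set.mem_range_self 1)
        rw [min_eq_right h]
        norm_num at this
        linarith
end

section
/- (Classification calibration of exponential loss with asymmetric weights) For c₁, c₋₁ > 0 define H(α) = c₁ e^{−α} + c₋₁ e^{α}. Then inf_{α∈ℝ} H(α) = 2√(c₁ c₋₁), and if c₁ > c₋₁ then inf_{α ≤ 0} H(α) = c₁ + c₋₁ > 2√(c₁c₋₁); consequently (c₁+c₋₁)·ψ((c₁−c₋₁)/(c₁+c₋₁)) = c₁ + c₋₁ − 2√(c₁c₋₁) with ψ(θ) = 1 − √(1−θ²). -/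
/-! The two terms of `a e^{-α} + b e^{α}` have the constant product `ab`, so AM-GM bounds the sum
below by `2√(ab)`, with equality when the terms agree, i.e. at `e^α = √(a / b)`. For `α ≤ 0` and
`b ≤ a` the sum exceeds its value `a + b` at `α = 0`, and `a + b - 2√(ab) = (√a - √b)²` is positive
when `a ≠ b`. Finally `1 - ((a - b) / (a + b))² = (2√(ab) / (a + b))²`, which turns the
`ψ`-transform into the gap `a + b - 2√(ab)`. -/

open Real Set

lemma add_sub_two_mul_sqrt_mul {x y : ℝ} (hx : 0 ≤ x) (hy : 0 ≤ y) :
    x + y - 2 * √(x * y) = (√x - √y) ^ 2 := by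
  rw [sqrt_mul hx, sub_sq, sq_sqrt hx, sq_sqrt hy]
  ring

lemma two_mul_sqrt_mul_le_add {x y : ℝ} (hx : 0 ≤ x) (hy : 0 ≤ y) :
    2 * √(x * y) ≤ x + y := by
  rw [← sub_nonneg, add_sub_two_mul_sqrt_mul hx hy]
  exact sq_nonneg _

lemma two_mul_sqrt_mul_lt_add {x y : ℝ} (hx : 0 ≤ x) (hy : 0 ≤ y) (hxy : x ≠ y) :
    2 * √(x * y) < x + y := by
  rw [← sub_pos, add_sub_two_mul_sqrt_mul hx hy]
  exact pow_two_pos_of_ne_zero (sub_ne_zero.2 fun h => hxy ((sqrt_inj hx hy).1 h))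

lemma two_mul_sqrt_mul_le_mul_exp_neg_add_mul_exp {a b : ℝ} (ha : 0 ≤ a) (hb : 0 ≤ b) (α : ℝ) :
    2 * √(a * b) ≤ a * exp (-α) + b * exp α := by
  have hprod : a * exp (-α) * (b * exp α) = a * b := by
    rw [mul_mul_mul_comm, ← exp_add, neg_add_cancel, exp_zero, mul_one]
  rw [← hprod]
  exact two_mul_sqrt_mul_le_add (by positivity) (by positivity)

lemma mul_exp_neg_add_mul_exp_log_sqrt_div {a b : ℝ} (ha : 0 < a) (hb : 0 < b) :
    a * exp (-log √(a / b)) + b * exp (log √(a / b)) = 2 * √(a * b) := by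
  have hpos : 0 < √(a / b) := sqrt_pos.2 (div_pos ha hb)
  rw [exp_neg, exp_log hpos, sqrt_div ha.le, sqrt_mul ha.le]
  have : 0 < √b := sqrt_pos.2 hb
  have : 0 < √a := sqrt_pos.2 ha
  field_simp
  rw [sq_sqrt ha.le, sq_sqrt hb.le]
  ring

lemma isLeast_range_mul_exp_neg_add_mul_exp {a b : ℝ} (ha : 0 < a) (hb : 0 < b) :
    IsLeast (range fun α => a * exp (-α) + b * exp α) (2 * √(a * b)) :=
  ⟨⟨_, mul_exp_neg_add_mul_exp_log_sqrt_div ha hb⟩,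
    forall_mem_range.2 (two_mul_sqrt_mul_le_mul_exp_neg_add_mul_exp ha.le hb.le)⟩

lemma add_le_mul_exp_neg_add_mul_exp {a b α : ℝ} (hb : 0 ≤ b) (hba : b ≤ a) (hα : α ≤ 0) :
    a + b ≤ a * exp (-α) + b * exp α := by
  have hexp_neg : 1 ≤ exp (-α) := one_le_exp_iff.2 (neg_nonneg.2 hα)
  have hbexp : b * exp α ≤ a := (mul_le_of_le_one_right hb (exp_le_one_iff.2 hα)).trans hba
  have hprod : exp (-α) * exp α = 1 := by rw [← exp_add, neg_add_cancel, exp_zero]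
  -- `a e^{-α} + b e^{α} - a - b = (e^{-α} - 1) (a - b e^{α})`
  nlinarith [mul_nonneg (sub_nonneg.2 hexp_neg) (sub_nonneg.2 hbexp)]

lemma isLeast_image_Iic_mul_exp_neg_add_mul_exp {a b : ℝ} (hb : 0 ≤ b) (hba : b ≤ a) :
    IsLeast ((fun α => a * exp (-α) + b * exp α) '' Iic 0) (a + b) :=
  ⟨⟨0, mem_Iic.2 le_rfl, by simp⟩,
    forall_mem_image.2 fun _ hα => add_le_mul_exp_neg_add_mul_exp hb hba hα⟩

lemma add_mul_one_sub_sqrt_one_sub_sq {a b : ℝ} (ha : 0 ≤ a) (hb : 0 ≤ b) (hab : 0 < a + b) :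
    (a + b) * (1 - √(1 - ((a - b) / (a + b)) ^ 2)) = a + b - 2 * √(a * b) := by
  have hsq : 1 - ((a - b) / (a + b)) ^ 2 = (2 * √(a * b) / (a + b)) ^ 2 := by
    rw [div_pow, div_pow, mul_pow, sq_sqrt (mul_nonneg ha hb)]
    field_simp
    ring
  rw [hsq, sqrt_sq (by positivity)]
  field_simp

/-- Classification calibration of exponential loss with asymmetric
weights: for `c₁, c₋₁ > 0` and `H(α) = c₁e^{−α} + c₋₁e^{α}`, `inf_α H(α) = 2√(c₁c₋₁)`;
if `c₁ > c₋₁` then `inf_{α ≤ 0} H(α) = c₁ + c₋₁ > 2√(c₁c₋₁)`; and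
`(c₁+c₋₁)·ψ((c₁−c₋₁)/(c₁+c₋₁)) = c₁ + c₋₁ − 2√(c₁c₋₁)` for `ψ(θ) = 1 − √(1−θ²)`. -/
theorem exponential_loss_calibration
    (c1 cm1 : ℝ) (hc1 : 0 < c1) (hcm1 : 0 < cm1)
    (H : ℝ → ℝ) (hH : ∀ α, H α = c1 * Real.exp (-α) + cm1 * Real.exp α) :
    IsGLB (Set.range H) (2 * Real.sqrt (c1 * cm1)) ∧
    (c1 > cm1 →
      IsGLB (H '' Set.Iic 0) (c1 + cm1) ∧ 2 * Real.sqrt (c1 * cm1) < c1 + cm1) ∧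
    (c1 + cm1) * (1 - Real.sqrt (1 - ((c1 - cm1) / (c1 + cm1)) ^ 2))
      = c1 + cm1 - 2 * Real.sqrt (c1 * cm1) := by
  obtain rfl : H = fun α => c1 * exp (-α) + cm1 * exp α := funext hH
  exact ⟨(isLeast_range_mul_exp_neg_add_mul_exp hc1 hcm1).isGLB,
    fun hgt => ⟨(isLeast_image_Iic_mul_exp_neg_add_mul_exp hcm1.le hgt.le).isGLB,
      two_mul_sqrt_mul_lt_add hc1.le hcm1.le hgt.ne'⟩,
    add_mul_one_sub_sqrt_one_sub_sq hc1.le hcm1.le (add_pos hc1 hcm1)⟩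
end

section
/- (Classification calibration of logistic loss with asymmetric weights) For c₁, c₋₁ > 0 define G(α) = c₁·log(1+e^{−α}) + c₋₁·log(1+e^{α}). Then inf_α G(α) = c₁ log((c₁+c₋₁)/c₁) + c₋₁ log((c₁+c₋₁)/c₋₁), attained at α = log(c₁/c₋₁), and if c₁ > c₋₁ then inf_{α≤0} G(α) = G(0) = (c₁+c₋₁)·log 2; the gap equals (c₁+c₋₁)·ψ((c₁−c₋₁)/(c₁+c₋₁)) where ψ(θ) = ((1+θ)log(1+θ) + (1−θ)log(1−θ))/2. -/
/-!
The derivative of `G` is `(c₋₁ eᵅ - c₁) / (1 + eᵅ)`, which changes sign exactly at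
`α = log (c₁ / c₋₁)`: `G` decreases before that point and increases after it, so the point is the
global minimiser. When `c₁ > c₋₁` it is positive, hence `G` is still decreasing on `(-∞, 0]`.
The gap identity follows from `1 ± θ = 2c₁ / (c₁ + c₋₁), 2c₋₁ / (c₁ + c₋₁)`.
-/

open Real Set

noncomputable def logisticRisk (a b α : ℝ) : ℝ :=
  a * log (1 + exp (-α)) + b * log (1 + exp α)

theorem hasDerivAt_logisticRisk (a b α : ℝ) :
    HasDerivAt (logisticRisk a b) ((b * exp α - a) / (1 + exp α)) α := by
  have hneg : HasDerivAt (fun x => log (1 + exp (-x))) (-exp (-α) / (1 + exp (-α))) α := by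
    simpa using (((hasDerivAt_neg α).exp).const_add 1).log (by positivity)
  have hpos : HasDerivAt (fun x => log (1 + exp x)) (exp α / (1 + exp α)) α :=
    ((hasDerivAt_exp α).const_add 1).log (by positivity)
  refine ((hneg.const_mul a).add (hpos.const_mul b)).congr_deriv ?_
  rw [exp_neg]
  field_simp
  ring

section

variable {a b : ℝ}

theorem antitoneOn_logisticRisk_Iic (ha : 0 < a) (hb : 0 < b) :
    AntitoneOn (logisticRisk a b) (Iic (log (a / b))) := by
  refine antitoneOn_of_hasDerivWithinAt_nonpos (convex_Iic _)
    (fun α _ => (hasDerivAt_logisticRisk a b α).continuousAt.continuousWithinAt)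
    (fun α _ => (hasDerivAt_logisticRisk a b α).hasDerivWithinAt) fun α hα => ?_
  rw [interior_Iic, mem_Iio, lt_log_iff_exp_lt (div_pos ha hb), lt_div_iff₀ hb] at hα
  exact div_nonpos_of_nonpos_of_nonneg (by linarith) (by positivity)

theorem monotoneOn_logisticRisk_Ici (ha : 0 < a) (hb : 0 < b) :
    MonotoneOn (logisticRisk a b) (Ici (log (a / b))) := by
  refine monotoneOn_of_hasDerivWithinAt_nonneg (convex_Ici _)
    (fun α _ => (hasDerivAt_logisticRisk a b α).continuousAt.continuousWithinAt)
    (fun α _ => (hasDerivAt_logisticRisk a b α).hasDerivWithinAt) fun α hα => ?_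
  rw [interior_Ici, mem_Ioi, log_lt_iff_lt_exp (div_pos ha hb), div_lt_iff₀ hb] at hα
  exact div_nonneg (by linarith) (by positivity)

theorem isMinOn_logisticRisk (ha : 0 < a) (hb : 0 < b) :
    IsMinOn (logisticRisk a b) univ (log (a / b)) := fun α _ => by
  rcases le_total α (log (a / b)) with hα | hα
  · exact antitoneOn_logisticRisk_Iic ha hb hα self_mem_Iic hα
  · exact monotoneOn_logisticRisk_Ici ha hb self_mem_Ici hα hα

theorem logisticRisk_log_div (ha : 0 < a) (hb : 0 < b) :
    logisticRisk a b (log (a / b)) = a * log ((a + b) / a) + b * log ((a + b) / b) := by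
  rw [logisticRisk, exp_neg, exp_log (div_pos ha hb), inv_div]
  congr 3
  · field_simp
  · field_simp
    ring

theorem logisticRisk_zero (a b : ℝ) : logisticRisk a b 0 = (a + b) * log 2 := by
  norm_num [logisticRisk]
  ring

end

noncomputable def calibrationPsi (θ : ℝ) : ℝ :=
  ((1 + θ) * log (1 + θ) + (1 - θ) * log (1 - θ)) / 2

theorem log_two_sub_logisticRisk_min {a b : ℝ} (ha : 0 < a) (hb : 0 < b) :
    (a + b) * log 2 - (a * log ((a + b) / a) + b * log ((a + b) / b))
      = (a + b) * calibrationPsi ((a - b) / (a + b)) := by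
  have hab : a + b ≠ 0 := by positivity
  have hp : 1 + (a - b) / (a + b) = 2 * a / (a + b) := by field_simp; ring
  have hm : 1 - (a - b) / (a + b) = 2 * b / (a + b) := by field_simp; ring
  rw [calibrationPsi, hp, hm, log_div (by positivity) hab, log_mul two_ne_zero ha.ne',
    log_div (by positivity) hab, log_mul two_ne_zero hb.ne', log_div hab ha.ne',
    log_div hab hb.ne']
  field_simp
  ring

/-- Classification calibration of logistic loss with asymmetric weights:
for `c₁, c₋₁ > 0` and `G(α) = c₁·log(1+e^{−α}) + c₋₁·log(1+e^{α})`, the infimum of `G` is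
`c₁·log((c₁+c₋₁)/c₁) + c₋₁·log((c₁+c₋₁)/c₋₁)`, attained at `α = log(c₁/c₋₁)`; if
`c₁ > c₋₁` then `inf_{α ≤ 0} G(α) = G(0) = (c₁+c₋₁)·log 2`; and the gap equals
`(c₁+c₋₁)·ψ((c₁−c₋₁)/(c₁+c₋₁))` with `ψ(θ) = ((1+θ)log(1+θ) + (1−θ)log(1−θ))/2`. -/
theorem logistic_loss_calibration
    (c1 cm1 : ℝ) (hc1 : 0 < c1) (hcm1 : 0 < cm1)
    (G : ℝ → ℝ)
    (hG : ∀ α, G α = c1 * Real.log (1 + Real.exp (-α)) + cm1 * Real.log (1 + Real.exp α)) :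
    IsGLB (Set.range G)
      (c1 * Real.log ((c1 + cm1) / c1) + cm1 * Real.log ((c1 + cm1) / cm1)) ∧
    G (Real.log (c1 / cm1))
      = c1 * Real.log ((c1 + cm1) / c1) + cm1 * Real.log ((c1 + cm1) / cm1) ∧
    (c1 > cm1 →
      IsGLB (G '' Set.Iic 0) (G 0) ∧ G 0 = (c1 + cm1) * Real.log 2) ∧
    (c1 + cm1) * Real.log 2
        - (c1 * Real.log ((c1 + cm1) / c1) + cm1 * Real.log ((c1 + cm1) / cm1))
      = (c1 + cm1) *
          (((1 + (c1 - cm1) / (c1 + cm1)) * Real.log (1 + (c1 - cm1) / (c1 + cm1))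
            + (1 - (c1 - cm1) / (c1 + cm1)) * Real.log (1 - (c1 - cm1) / (c1 + cm1))) / 2) := by
  obtain rfl : G = logisticRisk c1 cm1 := funext hG
  have hmin := logisticRisk_log_div hc1 hcm1
  refine ⟨?_, hmin, fun hgt => ⟨?_, logisticRisk_zero c1 cm1⟩,
    log_two_sub_logisticRisk_min hc1 hcm1⟩
  · rw [← hmin]
    exact IsLeast.isGLB ⟨mem_range_self _, forall_mem_range.2 fun α =>
      isMinOn_logisticRisk hc1 hcm1 (mem_univ α)⟩
  · have h0 : (0 : ℝ) ≤ log (c1 / cm1) := log_nonneg ((one_le_div hcm1).2 hgt.le)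
    exact IsLeast.isGLB ⟨mem_image_of_mem _ self_mem_Iic, forall_mem_image.2 fun α hα =>
      antitoneOn_logisticRisk_Iic hc1 hcm1 (hα.trans h0) h0 hα⟩
end
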